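/- Let Ω be an open bounded convex subset of ℝⁿ with diameter D_Ω, u its first Dirichlet Laplacian eigenfunction normalized so that max_{cl Ω} u = 1, and λ₁(Ω) its first Dirichlet eigenvalue. Fix κ ∈ (0,1), set w_κ := (−log(κu))^{1/2}, and let w̄_κ ∈ (√(−log κ), +∞) be the unique number with (κ²·e^{2 w̄_κ²} − 1)/(2 w̄_κ²) = π²/(λ₁(Ω)·D_Ω²). Then on the nonempty set Ω_κ := {x ∈ Ω : w_κ(x) < w̄_κ} one has w_κ = (w_κ)**, where (w_κ)** is the convex envelope of w_κ in Ω; in particular w_κ is convex on Ω_κ. -/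

import Mathlib

open Real Set Metric Filter Matrix

/-- The Laplacian of a function `f : ℝⁿ → ℝ` at a point `x`. -/
noncomputable def lap {n : ℕ} (f : EuclideanSpace ℝ (Fin n) → ℝ)
    (x : EuclideanSpace ℝ (Fin n)) : ℝ :=
  ∑ i, fderiv ℝ (fun y => fderiv ℝ f y (EuclideanSpace.single i 1)) x (EuclideanSpace.single i 1)

/-- The convex envelope of `w` in `Ω`:
`w**(x) = inf { Σ tᵢ w(xᵢ) : tᵢ ≥ 0, xᵢ ∈ Ω, Σ tᵢ = 1, Σ tᵢ xᵢ = x }`. -/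
noncomputable def convEnv {n : ℕ} (Ω : Set (EuclideanSpace ℝ (Fin n)))
    (w : EuclideanSpace ℝ (Fin n) → ℝ) (x : EuclideanSpace ℝ (Fin n)) : ℝ :=
  sInf {r : ℝ | ∃ (m : ℕ) (t : Fin m → ℝ) (q : Fin m → EuclideanSpace ℝ (Fin n)),
    (∀ i, 0 ≤ t i) ∧ (∀ i, q i ∈ Ω) ∧ ∑ i, t i = 1 ∧ ∑ i, t i • q i = x ∧
    r = ∑ i, t i * w (q i)}

/-- The Hessian matrix of `f : ℝⁿ → ℝ` at `x`. -/
noncomputable def hessianMatrix {n : ℕ} (f : EuclideanSpace ℝ (Fin n) → ℝ)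
    (x : EuclideanSpace ℝ (Fin n)) : Matrix (Fin n) (Fin n) ℝ :=
  Matrix.of fun i j =>
    fderiv ℝ (fun y => fderiv ℝ f y (EuclideanSpace.single j 1)) x (EuclideanSpace.single i 1)

/-- `(p, A)` belongs to the second-order subjet `J^{2,-} v (x)` (relative to `Ω`):
there is a smooth `φ` on `ℝⁿ` such that `v - φ` has a local minimum at `x` in `Ω` and
`(p, A) = (∇φ(x), ∇²φ(x))`. -/
def InSubjet {n : ℕ} (Ω : Set (EuclideanSpace ℝ (Fin n))) (v : EuclideanSpace ℝ (Fin n) → ℝ)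
    (x : EuclideanSpace ℝ (Fin n)) (p : EuclideanSpace ℝ (Fin n))
    (A : Matrix (Fin n) (Fin n) ℝ) : Prop :=
  ∃ φ : EuclideanSpace ℝ (Fin n) → ℝ, ContDiff ℝ (⊤ : ℕ∞) φ ∧
    (∃ ε > 0, ∀ y ∈ Ω, ‖y - x‖ < ε → v x - φ x ≤ v y - φ y) ∧
    p = gradient φ x ∧ A = hessianMatrix φ x

/-- Monotonicity of `s ↦ (k eˢ - 1)/s` for `0 < k ≤ 1`. -/
theorem auxMono {k a b : ℝ} (hk0 : 0 < k) (hk1 : k ≤ 1) (ha : 0 < a) (hab : a ≤ b) :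
    (k * Real.exp a - 1) / a ≤ (k * Real.exp b - 1) / b := by
  have hb : 0 < b := lt_of_lt_of_le ha hab
  rw [div_le_div_iff₀ ha hb]
  have key : b * (Real.exp a - 1) ≤ a * (Real.exp b - 1) := by
    have ht0 : (0:ℝ) ≤ a / b := by positivity
    have ht1 : (0:ℝ) ≤ 1 - a / b := by
      rw [sub_nonneg]; exact div_le_one_of_le₀ hab hb.le
    have ht2 : a / b + (1 - a / b) = 1 := by ring
    have hcx := convexOn_exp.2 (Set.mem_univ b) (Set.mem_univ (0:ℝ)) ht0 ht1 ht2
    simp only [smul_eq_mul, mul_zero, add_zero, Real.exp_zero, mul_one,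
      div_mul_cancel₀ a hb.ne'] at hcx
    have h3 := mul_le_mul_of_nonneg_left hcx hb.le
    have h4 : b * (a / b * rexp b + (1 - a / b)) = a * rexp b + b - a := by
      field_simp; ring
    rw [h4] at h3
    nlinarith
  nlinarith [mul_le_mul_of_nonneg_left key hk0.le,
    mul_le_of_le_one_left (sub_nonneg.2 hab) hk1]

/-- Gradient of `-log ∘ u`. -/
theorem auxGradLog {n : ℕ} (u : EuclideanSpace ℝ (Fin n) → ℝ) (x : EuclideanSpace ℝ (Fin n))
    (hd : DifferentiableAt ℝ u x) (hpos : 0 < u x) :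
    HasGradientAt (fun p => -Real.log (u p)) (-(u x)⁻¹ • gradient u x) x := by
  have hu : HasFDerivAt u (InnerProductSpace.toDual ℝ _ (gradient u x)) x :=
    hasGradientAt_iff_hasFDerivAt.1 hd.hasGradientAt
  have hlog : HasDerivAt Real.log (u x)⁻¹ (u x) := Real.hasDerivAt_log hpos.ne'
  have hcomp := (hlog.comp_hasFDerivAt x hu).neg
  rw [hasGradientAt_iff_hasFDerivAt]
  refine hcomp.congr_fderiv ?_
  ext y
  simp [InnerProductSpace.toDual_apply_apply, real_inner_smul_left, inner_smul_left]

/-- Directional derivative along a line, via the gradient. -/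
theorem auxLineDeriv {n : ℕ} (v : EuclideanSpace ℝ (Fin n) → ℝ)
    (g x d : EuclideanSpace ℝ (Fin n)) (t : ℝ) (h : HasGradientAt v g (x + t • d)) :
    HasDerivAt (fun s : ℝ => v (x + s • d)) (inner ℝ g d : ℝ) t := by
  have hmap : HasDerivAt (fun s : ℝ => x + s • d) d t := by
    simpa using ((hasDerivAt_id t).smul_const d).const_add x
  have hfd : HasFDerivAt v (InnerProductSpace.toDual ℝ _ g) (x + t • d) :=
    hasGradientAt_iff_hasFDerivAt.1 h
  have hc := hfd.comp_hasDerivAt t hmap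
  simp only [InnerProductSpace.toDual_apply_apply] at hc
  exact hc

set_option maxHeartbeats 1000000 in
/-- **Theorem 1.2 / Section 4 (local convexity of `w_κ` on the sublevel set).**
Let `Ω ⊂ ℝⁿ` be open bounded convex with diameter `D_Ω`, `u` its first Dirichlet
eigenfunction normalized by `max_{cl Ω} u = 1` (satisfying the Li–Yau estimate and the
Andrews–Clutterbuck inequality). Fix `κ ∈ (0,1)`, set `w_κ := (-log(κu))^{1/2}`, and let
`w̄_κ ∈ (√(-log κ), +∞)` satisfy `(κ² e^{2w̄_κ²} - 1)/(2w̄_κ²) = π²/(λ₁(Ω) D_Ω²)`.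
Then the set `Ω_κ := {x ∈ Ω : w_κ(x) < w̄_κ}` is nonempty, `w_κ = (w_κ)**` on `Ω_κ`,
and in particular `w_κ` is convex on `Ω_κ`. -/
theorem w_kappa_eq_convEnv_on_sublevel {n : ℕ}
    (Ω : Set (EuclideanSpace ℝ (Fin n))) (u : EuclideanSpace ℝ (Fin n) → ℝ) (lam : ℝ)
    (hΩo : IsOpen Ω) (hΩb : Bornology.IsBounded Ω) (hΩc : Convex ℝ Ω) (hΩne : Ω.Nonempty)
    (hu2 : ContDiffOn ℝ 2 u Ω) (huc : ContinuousOn u (closure Ω))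
    (hupos : ∀ x ∈ Ω, 0 < u x) (hubd : ∀ x ∈ frontier Ω, u x = 0)
    (hlam : 0 < lam) (heig : ∀ x ∈ Ω, -lap u x = lam * u x)
    (humax : ∀ x ∈ closure Ω, u x ≤ 1) (huone : ∃ x ∈ closure Ω, u x = 1)
    (hLY : ∀ x ∈ Ω, ‖gradient u x‖ ^ 2 + lam * (u x) ^ 2 ≤ lam)
    (hAC : ∀ z ∈ Ω, ∀ y ∈ Ω, z ≠ y →
      (inner ℝ (gradient (fun p => -Real.log (u p)) z - gradient (fun p => -Real.log (u p)) y)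
          (‖z - y‖⁻¹ • (z - y)) : ℝ) ≥
        (2 * Real.pi / Metric.diam Ω) *
          Real.tan (Real.pi * ‖z - y‖ / (2 * Metric.diam Ω)))
    (κ : ℝ) (hκ : κ ∈ Set.Ioo (0 : ℝ) 1)
    (wκ : EuclideanSpace ℝ (Fin n) → ℝ)
    (hwκ : ∀ z, wκ z = Real.sqrt (-Real.log (κ * u z)))
    (wbar : ℝ) (hwbar1 : Real.sqrt (-Real.log κ) < wbar)
    (hwbar2 : (κ ^ 2 * Real.exp (2 * wbar ^ 2) - 1) / (2 * wbar ^ 2) =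
      Real.pi ^ 2 / (lam * (Metric.diam Ω) ^ 2)) :
    ({x ∈ Ω | wκ x < wbar}).Nonempty ∧
    (∀ x ∈ {x ∈ Ω | wκ x < wbar}, wκ x = convEnv Ω wκ x) ∧
    ConvexOn ℝ {x ∈ Ω | wκ x < wbar} wκ := by
  obtain ⟨hκ0, hκ1⟩ := hκ
  set v : EuclideanSpace ℝ (Fin n) → ℝ := fun p => -Real.log (u p) with hvdef
  set D := Metric.diam Ω with hDdef
  set c : ℝ := -Real.log κ with hcdef
  have hc : 0 < c := by rw [hcdef, neg_pos]; exact Real.log_neg hκ0 hκ1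
  have hu01 : ∀ x ∈ Ω, 0 < u x ∧ u x ≤ 1 := fun x hx =>
    ⟨hupos x hx, humax x (subset_closure hx)⟩
  have hv0 : ∀ x ∈ Ω, 0 ≤ v x := by
    intro x hx
    have : Real.log (u x) ≤ 0 := Real.log_nonpos (hu01 x hx).1.le (hu01 x hx).2
    simp only [hvdef]
    simp only [neg_nonneg]
    linarith
  have hlogeq : ∀ x ∈ Ω, -Real.log (κ * u x) = c + v x := by
    intro x hx
    rw [Real.log_mul hκ0.ne' (hu01 x hx).1.ne', hcdef, hvdef]
    ring
  have hwsqrt : ∀ x ∈ Ω, wκ x = Real.sqrt (c + v x) := by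
    intro x hx; rw [hwκ, hlogeq x hx]
  have hwsq : ∀ x ∈ Ω, wκ x ^ 2 = c + v x := by
    intro x hx
    rw [hwsqrt x hx, Real.sq_sqrt (by linarith [hv0 x hx])]
  have hwpos : ∀ x ∈ Ω, 0 < wκ x := by
    intro x hx
    rw [hwsqrt x hx]
    exact Real.sqrt_pos.2 (by linarith [hv0 x hx])
  have hwnn : ∀ z, 0 ≤ wκ z := fun z => by rw [hwκ]; exact Real.sqrt_nonneg _
  have hwbar0 : 0 < wbar := lt_of_le_of_lt (Real.sqrt_nonneg c) hwbar1
  have hwbarsq : c < wbar ^ 2 := (Real.sqrt_lt' hwbar0).1 hwbar1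
  have hexpc : κ ^ 2 * Real.exp (2 * c) = 1 := by
    have h1 : Real.exp c = κ⁻¹ := by rw [hcdef, Real.exp_neg, Real.exp_log hκ0]
    have h2 : (2:ℝ) * c = c + c := by ring
    rw [h2, Real.exp_add, h1, sq]
    field_simp
  have hnum : 0 < κ ^ 2 * Real.exp (2 * wbar ^ 2) - 1 := by
    have hlt : Real.exp (2 * c) < Real.exp (2 * wbar ^ 2) :=
      Real.exp_lt_exp.2 (by linarith)
    have h2 := mul_lt_mul_of_pos_left hlt (show (0:ℝ) < κ ^ 2 by positivity)
    linarith
  have hD : 0 < D := by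
    rcases (Metric.diam_nonneg (s := Ω)).lt_or_eq with h | h
    · exact h
    · exfalso
      have hpos : 0 < (κ ^ 2 * Real.exp (2 * wbar ^ 2) - 1) / (2 * wbar ^ 2) :=
        div_pos hnum (by positivity)
      have hD0 : D = 0 := by rw [hDdef, ← h]
      rw [hwbar2, hD0] at hpos
      norm_num at hpos
  -- strict diameter bound
  have hdist : ∀ z ∈ Ω, ∀ y ∈ Ω, ‖z - y‖ < D := by
    intro z hz y hy
    rcases eq_or_ne z y with rfl | hne
    · simpa using hD
    · obtain ⟨ε, hε, hball⟩ := Metric.isOpen_iff.1 hΩo z hz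
      have hm0 : 0 < ‖z - y‖ := by
        rw [norm_pos_iff]; exact sub_ne_zero.2 hne
      set m := ‖z - y‖ with hm
      set z' := z + ((ε/2) * m⁻¹) • (z - y) with hz'
      have hz'mem : z' ∈ Ω := by
        apply hball
        rw [Metric.mem_ball, dist_eq_norm]
        have h1 : z' - z = ((ε/2) * m⁻¹) • (z - y) := by rw [hz']; abel
        rw [h1, norm_smul, Real.norm_eq_abs, abs_of_pos (by positivity), ← hm]
        rw [mul_assoc, inv_mul_cancel₀ hm0.ne', mul_one]
        linarith
      have hle : dist z' y ≤ D := Metric.dist_le_diam_of_mem hΩb hz'mem hy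
      have heq : dist z' y = m + ε/2 := by
        rw [dist_eq_norm]
        have h1 : z' - y = (1 + (ε/2) * m⁻¹) • (z - y) := by
          rw [hz', add_smul, one_smul]; abel
        rw [h1, norm_smul, Real.norm_eq_abs, abs_of_pos (by positivity), ← hm]
        field_simp
      rw [heq] at hle
      linarith
  -- differentiability and gradients
  have hdiffu : ∀ x ∈ Ω, DifferentiableAt ℝ u x := fun x hx =>
    ((hu2.contDiffAt (hΩo.mem_nhds hx)).differentiableAt (by norm_num))
  have hgradv : ∀ x ∈ Ω, HasGradientAt v (-(u x)⁻¹ • gradient u x) x := fun x hx =>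
    auxGradLog u x (hdiffu x hx) (hu01 x hx).1
  have hdiffv : ∀ x ∈ Ω, DifferentiableAt ℝ v x := fun x hx =>
    (hgradv x hx).differentiableAt
  have hvp : ∀ p, v p = -Real.log (u p) := fun p => rfl
  clear hvdef
  clear_value v
  -- quantitative Andrews-Clutterbuck
  have hACq : ∀ z ∈ Ω, ∀ x ∈ Ω,
      Real.pi ^ 2 / D ^ 2 * ‖z - x‖ ^ 2 ≤
        (inner ℝ (gradient v z - gradient v x) (z - x) : ℝ) := by
    intro z hz x hx
    rcases eq_or_ne z x with rfl | hne
    · simp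
    · have h1 := hAC z hz x hx hne
      have hm0 : 0 < ‖z - x‖ := by rw [norm_pos_iff]; exact sub_ne_zero.2 hne
      set m := ‖z - x‖ with hm
      have hmD : m < D := hdist z hz x hx
      have hθ : Real.pi * m / (2 * D) < Real.pi / 2 := by
        rw [div_lt_div_iff₀ (by positivity) (by norm_num)]
        nlinarith [Real.pi_pos]
      have htan := Real.lt_tan (by positivity) hθ
      rw [real_inner_smul_right] at h1
      have h2 : (2 * Real.pi / D) * (Real.pi * m / (2 * D)) ≤
          (2 * Real.pi / D) * Real.tan (Real.pi * m / (2 * D)) :=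
        mul_le_mul_of_nonneg_left htan.le (by positivity)
      have h3 : m * ((2 * Real.pi / D) * (Real.pi * m / (2 * D))) ≤
          m * (m⁻¹ * (inner ℝ (gradient v z - gradient v x) (z - x) : ℝ)) := by
        apply mul_le_mul_of_nonneg_left _ hm0.le
        exact le_trans h2 h1
      calc Real.pi ^ 2 / D ^ 2 * m ^ 2
          = m * ((2 * Real.pi / D) * (Real.pi * m / (2 * D))) := by field_simp
        _ ≤ m * (m⁻¹ * (inner ℝ (gradient v z - gradient v x) (z - x) : ℝ)) := h3
        _ = (inner ℝ (gradient v z - gradient v x) (z - x) : ℝ) := by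
            rw [← mul_assoc, mul_inv_cancel₀ hm0.ne', one_mul]
  -- strong convexity of v
  have hstrong : ∀ x ∈ Ω, ∀ y ∈ Ω,
      v x + (inner ℝ (gradient v x) (y - x) : ℝ)
        + Real.pi ^ 2 / (2 * D ^ 2) * ‖y - x‖ ^ 2 ≤ v y := by
    intro x hx y hy
    set d := y - x with hd
    have hseg : ∀ t : ℝ, t ∈ Icc (0:ℝ) 1 → x + t • d ∈ Ω := by
      intro t ht
      have hxt : x + t • d = (1 - t) • x + t • y := by rw [hd]; module
      rw [hxt]
      exact hΩc hx hy (by linarith [ht.2]) ht.1 (by ring)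
    set K := Real.pi ^ 2 / (2 * D ^ 2) * ‖d‖ ^ 2 with hK
    set φ : ℝ → ℝ := fun t =>
      v (x + t • d) - t * (inner ℝ (gradient v x) d : ℝ) - K * t ^ 2 with hφ
    have hφd : ∀ t ∈ Icc (0:ℝ) 1, HasDerivAt φ
        ((inner ℝ (gradient v (x + t • d)) d : ℝ) - (inner ℝ (gradient v x) d : ℝ)
          - K * (2 * t)) t := by
      intro t ht
      have hz := hseg t ht
      have h1 : HasDerivAt (fun s : ℝ => v (x + s • d))
          (inner ℝ (gradient v (x + t • d)) d : ℝ) t :=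
        auxLineDeriv v _ x d t (hdiffv _ hz).hasGradientAt
      have h2 : HasDerivAt (fun s : ℝ => s * (inner ℝ (gradient v x) d : ℝ))
          (inner ℝ (gradient v x) d : ℝ) t := by
        simpa using (hasDerivAt_id t).mul_const (inner ℝ (gradient v x) d : ℝ)
      have h3 : HasDerivAt (fun s : ℝ => K * s ^ 2) (K * (2 * t)) t := by
        have := (hasDerivAt_pow 2 t).const_mul K
        simpa [pow_one, mul_comm, mul_assoc] using this
      exact (h1.sub h2).sub h3
    have hmono : MonotoneOn φ (Icc 0 1) := by
      apply monotoneOn_of_deriv_nonneg (convex_Icc 0 1)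
      · intro t ht; exact (hφd t ht).continuousAt.continuousWithinAt
      · intro t ht
        rw [interior_Icc] at ht
        exact ((hφd t (Ioo_subset_Icc_self ht)).differentiableAt).differentiableWithinAt
      · intro t ht
        rw [interior_Icc] at ht
        rw [(hφd t (Ioo_subset_Icc_self ht)).deriv]
        have hz := hseg t (Ioo_subset_Icc_self ht)
        have hq := hACq (x + t • d) hz x hx
        have he : (x + t • d) - x = t • d := by abel
        rw [he, real_inner_smul_right, inner_sub_left] at hq
        have hn : ‖t • d‖ ^ 2 = t ^ 2 * ‖d‖ ^ 2 := by
          rw [norm_smul, Real.norm_eq_abs, mul_pow, sq_abs]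
        rw [hn] at hq
        have hK2 : 2 * K = Real.pi ^ 2 / D ^ 2 * ‖d‖ ^ 2 := by
          rw [hK]; field_simp
        nlinarith [ht.1, hq, hK2]
    have h01 := hmono (left_mem_Icc.2 zero_le_one) (right_mem_Icc.2 zero_le_one) zero_le_one
    have hφ0 : φ 0 = v x := by simp [hφ]
    have hφ1 : φ 1 = v y - (inner ℝ (gradient v x) d : ℝ) - K := by
      have h1 : x + d = y := by rw [hd]; abel
      simp only [hφ]
      rw [one_smul, h1]
      ring
    rw [hφ0, hφ1] at h01
    linarith
  -- gradient bound on the sublevel set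
  have hgrad : ∀ x ∈ Ω, wκ x < wbar →
      ‖gradient v x‖ ^ 2 ≤ 2 * Real.pi ^ 2 * (wκ x) ^ 2 / D ^ 2 := by
    intro x hx hxw
    have hu0 := (hu01 x hx).1
    have hgv : gradient v x = -(u x)⁻¹ • gradient u x := (hgradv x hx).gradient
    have hn : ‖gradient v x‖ ^ 2 = ((u x)⁻¹) ^ 2 * ‖gradient u x‖ ^ 2 := by
      rw [hgv, norm_smul, Real.norm_eq_abs, abs_neg, abs_inv, abs_of_pos hu0, mul_pow]
    have hLYx := hLY x hx
    have hW : 0 < wκ x := hwpos x hx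
    have hWsq : wκ x ^ 2 = c + v x := hwsq x hx
    have hexpW : κ ^ 2 * Real.exp (2 * wκ x ^ 2) = ((u x)⁻¹) ^ 2 := by
      have hev : Real.exp (v x) = (u x)⁻¹ := by
        rw [hvp x, Real.exp_neg, Real.exp_log hu0]
      have h2 : (2:ℝ) * (c + v x) = 2 * c + (v x + v x) := by ring
      rw [hWsq, h2, Real.exp_add, Real.exp_add, hev, ← mul_assoc, hexpc, one_mul]
      ring
    have hmono := auxMono (k := κ ^ 2) (a := 2 * wκ x ^ 2) (b := 2 * wbar ^ 2)
      (by positivity) (by nlinarith) (by positivity)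
      (by nlinarith [hwnn x])
    rw [hwbar2] at hmono
    have h6 : κ ^ 2 * Real.exp (2 * wκ x ^ 2) - 1 ≤
        2 * wκ x ^ 2 * (Real.pi ^ 2 / (lam * D ^ 2)) := by
      rw [div_le_iff₀ (by positivity)] at hmono
      linarith
    have h7 : ‖gradient u x‖ ^ 2 ≤ lam * (1 - (u x) ^ 2) := by nlinarith
    have h8 : ‖gradient v x‖ ^ 2 ≤ lam * (((u x)⁻¹) ^ 2 - 1) := by
      rw [hn]
      have h9 := mul_le_mul_of_nonneg_left h7 (by positivity : (0:ℝ) ≤ ((u x)⁻¹) ^ 2)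
      have h10 : ((u x)⁻¹) ^ 2 * (lam * (1 - u x ^ 2)) = lam * (((u x)⁻¹) ^ 2 - 1) := by
        field_simp
      linarith [h9, h10.symm.le, h10.le]
    rw [← hexpW] at h8
    have h9 : lam * (κ ^ 2 * Real.exp (2 * wκ x ^ 2) - 1) ≤
        lam * (2 * wκ x ^ 2 * (Real.pi ^ 2 / (lam * D ^ 2))) :=
      mul_le_mul_of_nonneg_left h6 hlam.le
    have h10 : lam * (2 * wκ x ^ 2 * (Real.pi ^ 2 / (lam * D ^ 2))) =
        2 * Real.pi ^ 2 * (wκ x) ^ 2 / D ^ 2 := by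
      field_simp
    linarith
  -- global affine support at points of the sublevel set
  have hsupp : ∀ x ∈ Ω, wκ x < wbar → ∀ y ∈ Ω,
      wκ x + (inner ℝ (gradient v x) (y - x) : ℝ) / (2 * wκ x) ≤ wκ y := by
    intro x hx hxw y hy
    have hW : 0 < wκ x := hwpos x hx
    set s := (inner ℝ (gradient v x) (y - x) : ℝ) with hs
    rcases le_or_gt (wκ x + s / (2 * wκ x)) 0 with hc0 | hc0
    · linarith [hwnn y]
    · have hWsq : wκ x ^ 2 = c + v x := hwsq x hx
      have hgb := hgrad x hx hxw
      have hCS : s ^ 2 ≤ ‖gradient v x‖ ^ 2 * ‖y - x‖ ^ 2 := by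
        nlinarith [abs_real_inner_le_norm (gradient v x) (y - x), sq_abs s,
          abs_nonneg s, norm_nonneg (gradient v x), norm_nonneg (y - x)]
      have hst := hstrong x hx y hy
      rw [← hs] at hst
      have hkey : (wκ x + s / (2 * wκ x)) ^ 2 ≤ c + v y := by
        have hexp : (wκ x + s / (2 * wκ x)) ^ 2 =
            wκ x ^ 2 + s + s ^ 2 / (4 * wκ x ^ 2) := by
          field_simp
          ring
        have h5 : s ^ 2 / (4 * wκ x ^ 2) ≤ Real.pi ^ 2 / (2 * D ^ 2) * ‖y - x‖ ^ 2 := by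
          rw [div_le_iff₀ (by positivity)]
          have h11 := mul_le_mul_of_nonneg_right hgb (sq_nonneg ‖y - x‖)
          have h12 : 2 * Real.pi ^ 2 * wκ x ^ 2 / D ^ 2 * ‖y - x‖ ^ 2 =
              Real.pi ^ 2 / (2 * D ^ 2) * ‖y - x‖ ^ 2 * (4 * wκ x ^ 2) := by
            field_simp
            ring
          nlinarith [hCS, h11, h12]
        rw [hexp]
        linarith
      calc wκ x + s / (2 * wκ x) = Real.sqrt ((wκ x + s / (2 * wκ x)) ^ 2) :=
            (Real.sqrt_sq hc0.le).symm
        _ ≤ Real.sqrt (c + v y) := Real.sqrt_le_sqrt hkey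
        _ = wκ y := (hwsqrt y hy).symm
  -- the sublevel set is nonempty
  obtain ⟨x₀, hx₀c, hx₀1⟩ := huone
  have hx₀ : x₀ ∈ Ω := by
    by_contra h
    have hfr : x₀ ∈ frontier Ω := by
      rw [hΩo.frontier_eq]
      exact ⟨hx₀c, h⟩
    rw [hubd x₀ hfr] at hx₀1
    norm_num at hx₀1
  have hx₀S : x₀ ∈ {x ∈ Ω | wκ x < wbar} := by
    refine ⟨hx₀, ?_⟩
    rw [hwκ, hx₀1, mul_one, ← hcdef]
    exact hwbar1
  -- the sublevel set is convex
  have hSconv : Convex ℝ {x ∈ Ω | wκ x < wbar} := by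
    intro x hx y hy a b ha hb hab
    obtain ⟨hxΩ, hxw⟩ := hx
    obtain ⟨hyΩ, hyw⟩ := hy
    have hzΩ : a • x + b • y ∈ Ω := hΩc hxΩ hyΩ ha hb hab
    set z := a • x + b • y with hz
    have hcomb : a • (x - z) + b • (y - z) = 0 := by
      have h1 : a • (x - z) + b • (y - z) = (a • x + b • y) - (a + b) • z := by module
      rw [h1, hab, one_smul, hz, sub_self]
    have hzero : a * (inner ℝ (gradient v z) (x - z) : ℝ)
        + b * (inner ℝ (gradient v z) (y - z) : ℝ) = 0 := by
      rw [← real_inner_smul_right, ← real_inner_smul_right, ← inner_add_right, hcomb,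
        inner_zero_right]
    have h1 := hstrong z hzΩ x hxΩ
    have h2 := hstrong z hzΩ y hyΩ
    have hvz : v z ≤ a * v x + b * v y := by
      have ha1 := mul_le_mul_of_nonneg_left h1 ha
      have hb1 := mul_le_mul_of_nonneg_left h2 hb
      have hP1 : 0 ≤ a * (Real.pi ^ 2 / (2 * D ^ 2) * ‖x - z‖ ^ 2) := by positivity
      have hP2 : 0 ≤ b * (Real.pi ^ 2 / (2 * D ^ 2) * ‖y - z‖ ^ 2) := by positivity
      have hsumv : a * v z + b * v z = v z := by rw [← add_mul, hab, one_mul]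
      nlinarith [ha1, hb1, hP1, hP2, hsumv, hzero]
    have hvx : v x < wbar ^ 2 - c := by
      have := hwsq x hxΩ
      nlinarith [hwnn x, hwpos x hxΩ]
    have hvy : v y < wbar ^ 2 - c := by
      have := hwsq y hyΩ
      nlinarith [hwnn y, hwpos y hyΩ]
    have hmax : v z ≤ max (v x) (v y) := by
      have h3 : a * v x ≤ a * max (v x) (v y) :=
        mul_le_mul_of_nonneg_left (le_max_left _ _) ha
      have h4 : b * v y ≤ b * max (v x) (v y) :=
        mul_le_mul_of_nonneg_left (le_max_right _ _) hb
      have h6 : a * max (v x) (v y) + b * max (v x) (v y) = max (v x) (v y) := by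
        rw [← add_mul, hab, one_mul]
      linarith
    refine ⟨hzΩ, ?_⟩
    rw [hwsqrt z hzΩ, Real.sqrt_lt' hwbar0]
    have := max_lt hvx hvy
    linarith [lt_of_le_of_lt hmax this]
  refine ⟨⟨x₀, hx₀S⟩, ?_, ?_⟩
  · -- convex envelope equality
    intro x hx
    obtain ⟨hxΩ, hxw⟩ := hx
    have hW : 0 < wκ x := hwpos x hxΩ
    have hmem : wκ x ∈ {r : ℝ | ∃ (m : ℕ) (t : Fin m → ℝ)
        (q : Fin m → EuclideanSpace ℝ (Fin n)),
        (∀ i, 0 ≤ t i) ∧ (∀ i, q i ∈ Ω) ∧ ∑ i, t i = 1 ∧ ∑ i, t i • q i = x ∧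
        r = ∑ i, t i * wκ (q i)} := by
      exact ⟨1, fun _ => (1:ℝ), fun _ => x, fun i => zero_le_one, fun i => hxΩ,
        by simp, by simp, by simp⟩
    have hlb : ∀ r ∈ {r : ℝ | ∃ (m : ℕ) (t : Fin m → ℝ)
        (q : Fin m → EuclideanSpace ℝ (Fin n)),
        (∀ i, 0 ≤ t i) ∧ (∀ i, q i ∈ Ω) ∧ ∑ i, t i = 1 ∧ ∑ i, t i • q i = x ∧
        r = ∑ i, t i * wκ (q i)}, wκ x ≤ r := by
      rintro r ⟨m, t, q, ht, hq, htsum, hqsum, rfl⟩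
      have hterm : ∀ i, t i * (wκ x + (inner ℝ (gradient v x) (q i - x) : ℝ)
          / (2 * wκ x)) ≤ t i * wκ (q i) := fun i =>
        mul_le_mul_of_nonneg_left (hsupp x hxΩ hxw (q i) (hq i)) (ht i)
      have hsum := Finset.sum_le_sum (fun i (_ : i ∈ Finset.univ) => hterm i)
      have hzv : ∑ i, t i • (q i - x) = (0 : EuclideanSpace ℝ (Fin n)) := by
        simp only [smul_sub]
        rw [Finset.sum_sub_distrib, ← Finset.sum_smul, htsum, hqsum, one_smul, sub_self]
      have hzero : ∑ i, t i * (inner ℝ (gradient v x) (q i - x) : ℝ) = 0 := by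
        have hcongr : ∀ i ∈ Finset.univ, t i * (inner ℝ (gradient v x) (q i - x) : ℝ)
            = (inner ℝ (gradient v x) (t i • (q i - x)) : ℝ) := fun i _ =>
          (real_inner_smul_right _ _ _).symm
        rw [Finset.sum_congr rfl hcongr, ← inner_sum, hzv, inner_zero_right]
      have hLHS : ∑ i, t i * (wκ x + (inner ℝ (gradient v x) (q i - x) : ℝ)
          / (2 * wκ x)) = wκ x := by
        simp only [mul_add]
        rw [Finset.sum_add_distrib, ← Finset.sum_mul, htsum, one_mul]
        have hdsum : ∑ i, t i * ((inner ℝ (gradient v x) (q i - x) : ℝ) / (2 * wκ x))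
            = (∑ i, t i * (inner ℝ (gradient v x) (q i - x) : ℝ)) / (2 * wκ x) := by
          rw [Finset.sum_div]
          exact Finset.sum_congr rfl fun i _ => (mul_div_assoc _ _ _).symm
        rw [hdsum, hzero, zero_div, add_zero]
      rw [hLHS] at hsum
      exact hsum
    rw [convEnv]
    exact le_antisymm (le_csInf ⟨wκ x, hmem⟩ hlb) (csInf_le ⟨wκ x, hlb⟩ hmem)
  · -- convexity
    refine ⟨hSconv, ?_⟩
    intro x hx y hy a b ha hb hab
    have hzS := hSconv hx hy ha hb hab
    obtain ⟨hxΩ, _⟩ := hx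
    obtain ⟨hyΩ, _⟩ := hy
    obtain ⟨hzΩ, hzw⟩ := hzS
    set z := a • x + b • y with hz
    have hW : 0 < wκ z := hwpos z hzΩ
    have hcomb : a • (x - z) + b • (y - z) = 0 := by
      have h1 : a • (x - z) + b • (y - z) = (a • x + b • y) - (a + b) • z := by module
      rw [h1, hab, one_smul, hz, sub_self]
    have hzero : a * (inner ℝ (gradient v z) (x - z) : ℝ)
        + b * (inner ℝ (gradient v z) (y - z) : ℝ) = 0 := by
      rw [← real_inner_smul_right, ← real_inner_smul_right, ← inner_add_right, hcomb,
        inner_zero_right]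
    have h1 := hsupp z hzΩ hzw x hxΩ
    have h2 := hsupp z hzΩ hzw y hyΩ
    have h3 := mul_le_mul_of_nonneg_left h1 ha
    have h4 := mul_le_mul_of_nonneg_left h2 hb
    have hid : a * (wκ z + (inner ℝ (gradient v z) (x - z) : ℝ) / (2 * wκ z))
        + b * (wκ z + (inner ℝ (gradient v z) (y - z) : ℝ) / (2 * wκ z))
        = (a + b) * wκ z + (a * (inner ℝ (gradient v z) (x - z) : ℝ)
          + b * (inner ℝ (gradient v z) (y - z) : ℝ)) / (2 * wκ z) := by
      field_simp
      ring
    rw [hzero, hab, one_mul, zero_div, add_zero] at hid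
    simp only [smul_eq_mul]
    linarith
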